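/- arXiv:1912.07688 — 2 statements merged into one kernel-verified Lean document; each statement's English description precedes it below -/
import Mathlib

section
/- Fix p_gen, p_swap ∈ (0,1], and let (f_n) and (f_n^up) be the waiting-time distributions of the SWAP-ONLY protocol and its dominating sequential variant, with cumulative sums F_n(t) = Σ_{s=0}^{t} f_n(s) and F_n^up(t) = Σ_{s=0}^{t} f_n^up(s). Then for every n ≥ 0 and every t ∈ ℕ, F_n^up(t) ≤ F_n(t); that is, T_n^upper stochastically dominates T_n. -/
noncomputable section

namespace RepeaterChain

/-- Convolution of two functions on `ℕ`: `(a*b)(t) = Σ_{s=0}^{t} a(s)·b(t−s)`. -/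
def conv (a b : ℕ → ℝ) : ℕ → ℝ := fun t => ∑ s ∈ Finset.range (t + 1), a s * b (t - s)

/-- `convPow m k` is the `k`-fold convolution `m^{*k}` of `m` with itself
(`convPow m 0` is the convolution identity, the delta at `0`, and `convPow m 1 = m`). -/
def convPow (m : ℕ → ℝ) : ℕ → ℕ → ℝ
  | 0 => fun t => if t = 0 then 1 else 0
  | k + 1 => conv (convPow m k) m

/-- Cumulative sums: `F(t) = Σ_{s=0}^{t} f(s)`. -/
def cum (f : ℕ → ℝ) : ℕ → ℝ := fun t => ∑ s ∈ Finset.range (t + 1), f s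

/-- The geometric distribution with parameter `p`, supported on `{1, 2, …}`:
`f(0) = 0` and `f(t) = p·(1−p)^{t−1}` for `t ≥ 1`. -/
def geomPMF (p : ℝ) : ℕ → ℝ := fun t => if t = 0 then 0 else p * (1 - p) ^ (t - 1)

/-- Distribution of the maximum of two i.i.d. copies of a variable with pmf `f`:
`m(0) = 0` and `m(t) = F(t)² − F(t−1)²` for `t ≥ 1`. -/
def maxPMF (f : ℕ → ℝ) : ℕ → ℝ :=
  fun t => if t = 0 then 0 else cum f t ^ 2 - cum f (t - 1) ^ 2

/-- Distribution of the geometric compound sum with parameter `p` of summands with pmf `m`: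
`t ↦ Σ_{k=1}^{∞} p·(1−p)^{k−1}·m^{*k}(t)` (the sum over `k ≥ 1` written via `k ↦ k + 1`). -/
def geomCompound (p : ℝ) (m : ℕ → ℝ) : ℕ → ℝ :=
  fun t => ∑' k : ℕ, p * (1 - p) ^ k * convPow m (k + 1) t

/-- The waiting-time distribution `f_n` of `T_n` for the SWAP-ONLY protocol on a `2^n`-segment
repeater chain: `f_0` is geometric with parameter `p_gen`, and `f_{n+1}` is the geometric compound
sum (parameter `p_swap`) of copies of the maximum of two i.i.d. copies of `T_n`. -/
def fSwap (pgen pswap : ℝ) : ℕ → ℕ → ℝ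
  | 0 => geomPMF pgen
  | n + 1 => geomCompound pswap (maxPMF (fSwap pgen pswap n))

/-- The waiting-time distribution `f_n^up` of the dominating sequential variant `T_n^upper`,
in which the two links at every swap level are produced sequentially rather than in parallel:
`f_0^up = f_0`, and `f_{n+1}^up` is the geometric compound sum (parameter `p_swap`) of copies of
the sum of two i.i.d. copies of `T_n^upper`. -/
def fUp (pgen pswap : ℝ) : ℕ → ℕ → ℝ
  | 0 => geomPMF pgen
  | n + 1 => geomCompound pswap (conv (fUp pgen pswap n) (fUp pgen pswap n))

end RepeaterChain

open RepeaterChain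

/-!
Induction on `n`, comparing cumulative sums. For sub-probability mass functions both building
blocks are monotone for this order: `cum (a * b) t = Σ_s a s · cum b (t - s)`, and the cumulative
sum of a geometric compound is the geometric mixture of the cumulative sums of the `m^{*k}`.
At the inductive step, `P(X + Y ≤ t) ≤ P(X ≤ t) P(Y ≤ t) = F_n^up(t)² ≤ F_n(t)² = P(max ≤ t)`,
so the summand distribution of `f_{n+1}^up` is dominated by that of `f_{n+1}`.
-/

namespace RepeaterChain

structure IsSubPMF (f : ℕ → ℝ) : Prop where
  nonneg : ∀ t, 0 ≤ f t
  cum_le_one : ∀ t, cum f t ≤ 1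

section Cumulative

variable {f : ℕ → ℝ}

theorem cum_succ (f : ℕ → ℝ) (t : ℕ) : cum f (t + 1) = cum f t + f (t + 1) :=
  Finset.sum_range_succ f (t + 1)

theorem cum_nonneg (hf : ∀ t, 0 ≤ f t) (t : ℕ) : 0 ≤ cum f t :=
  Finset.sum_nonneg fun s _ => hf s

theorem cum_mono (hf : ∀ t, 0 ≤ f t) : Monotone (cum f) := fun _ _ h =>
  Finset.sum_le_sum_of_subset_of_nonneg (Finset.range_subset_range.mpr (by omega))
    fun s _ _ => hf s

theorem le_cum (hf : ∀ t, 0 ≤ f t) (t : ℕ) : f t ≤ cum f t :=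
  Finset.single_le_sum (fun s _ => hf s) (Finset.self_mem_range_succ t)

end Cumulative

section Convolution

variable {a b c d : ℕ → ℝ}

theorem conv_comm (a b : ℕ → ℝ) : conv a b = conv b a := by
  funext t
  rw [conv, conv, ← Finset.sum_range_reflect]
  refine Finset.sum_congr rfl fun s hs => ?_
  rw [Finset.mem_range] at hs
  rw [show t + 1 - 1 - s = t - s by omega, show t - (t - s) = s by omega, mul_comm]

theorem cum_conv (a b : ℕ → ℝ) (t : ℕ) :
    cum (conv a b) t = ∑ s ∈ Finset.range (t + 1), a s * cum b (t - s) := by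
  calc cum (conv a b) t
      = ∑ u ∈ Finset.range (t + 1), ∑ s ∈ Finset.range (u + 1), a s * b (u - s) := rfl
    _ = ∑ s ∈ Finset.range (t + 1), ∑ u ∈ Finset.Ico s (t + 1), a s * b (u - s) :=
        Finset.sum_comm' fun u s => by simp only [Finset.mem_range, Finset.mem_Ico]; omega
    _ = ∑ s ∈ Finset.range (t + 1), a s * cum b (t - s) := by
        refine Finset.sum_congr rfl fun s hs => ?_
        rw [Finset.mem_range] at hs
        rw [← Finset.mul_sum, Finset.sum_Ico_eq_sum_range, show t + 1 - s = t - s + 1 by omega]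
        simp only [Nat.add_sub_cancel_left, cum]

theorem conv_nonneg (ha : ∀ t, 0 ≤ a t) (hb : ∀ t, 0 ≤ b t) (t : ℕ) : 0 ≤ conv a b t :=
  Finset.sum_nonneg fun s _ => mul_nonneg (ha s) (hb _)

theorem cum_conv_le_mul (ha : ∀ t, 0 ≤ a t) (hb : ∀ t, 0 ≤ b t) (t : ℕ) :
    cum (conv a b) t ≤ cum a t * cum b t := by
  rw [cum_conv, cum, Finset.sum_mul]
  exact Finset.sum_le_sum fun s _ =>
    mul_le_mul_of_nonneg_left (cum_mono hb (Nat.sub_le t s)) (ha s)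

theorem cum_conv_mono (ha : ∀ t, 0 ≤ a t) (hd : ∀ t, 0 ≤ d t)
    (hac : ∀ t, cum a t ≤ cum c t) (hbd : ∀ t, cum b t ≤ cum d t) (t : ℕ) :
    cum (conv a b) t ≤ cum (conv c d) t :=
  calc cum (conv a b) t ≤ cum (conv a d) t := by
        rw [cum_conv, cum_conv]
        exact Finset.sum_le_sum fun s _ => mul_le_mul_of_nonneg_left (hbd _) (ha s)
    _ ≤ cum (conv c d) t := by
        rw [conv_comm a, conv_comm c, cum_conv, cum_conv]
        exact Finset.sum_le_sum fun s _ => mul_le_mul_of_nonneg_left (hac _) (hd s)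

theorem IsSubPMF.conv (ha : IsSubPMF a) (hb : IsSubPMF b) : IsSubPMF (conv a b) where
  nonneg := conv_nonneg ha.nonneg hb.nonneg
  cum_le_one t := (cum_conv_le_mul ha.nonneg hb.nonneg t).trans <|
    mul_le_one₀ (ha.cum_le_one t) (cum_nonneg hb.nonneg t) (hb.cum_le_one t)

theorem cum_convPow_zero (m : ℕ → ℝ) (t : ℕ) : cum (convPow m 0) t = 1 := by
  simp [cum, convPow]

theorem convPow_nonneg (ha : ∀ t, 0 ≤ a t) (k t : ℕ) : 0 ≤ convPow a k t := by
  induction k generalizing t with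
  | zero => simp only [convPow]; positivity
  | succ k ih => exact conv_nonneg ih ha t

theorem IsSubPMF.convPow (ha : IsSubPMF a) (k : ℕ) : IsSubPMF (convPow a k) := by
  induction k with
  | zero => exact ⟨convPow_nonneg ha.nonneg 0, fun t => (cum_convPow_zero a t).le⟩
  | succ k ih => exact ih.conv ha

theorem cum_convPow_mono (ha : ∀ t, 0 ≤ a t) (hb : ∀ t, 0 ≤ b t)
    (hab : ∀ t, cum a t ≤ cum b t) (k : ℕ) (t : ℕ) :
    cum (convPow a k) t ≤ cum (convPow b k) t := by
  induction k generalizing t with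
  | zero => exact le_rfl
  | succ k ih => exact cum_conv_mono (convPow_nonneg ha k) hb ih hab t

theorem convPow_succ_apply_zero (ha : a 0 = 0) (k : ℕ) : convPow a (k + 1) 0 = 0 := by
  simp [convPow, RepeaterChain.conv, ha]

end Convolution

theorem cum_geomPMF (p : ℝ) (t : ℕ) : cum (geomPMF p) t = 1 - (1 - p) ^ t := by
  induction t with
  | zero => simp [cum, geomPMF]
  | succ t ih =>
    rw [cum_succ, ih]
    simp only [geomPMF, Nat.add_sub_cancel, Nat.succ_ne_zero, if_false]
    ring

theorem isSubPMF_geomPMF {p : ℝ} (hp0 : 0 ≤ p) (hp1 : p ≤ 1) : IsSubPMF (geomPMF p) where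
  nonneg t := by
    unfold geomPMF
    split
    · exact le_rfl
    · exact mul_nonneg hp0 (pow_nonneg (sub_nonneg.2 hp1) _)
  cum_le_one t := by
    rw [cum_geomPMF]
    linarith [pow_nonneg (sub_nonneg.2 hp1) t]

section Maximum

variable {f g : ℕ → ℝ}

theorem cum_maxPMF (hf0 : f 0 = 0) (t : ℕ) : cum (maxPMF f) t = cum f t ^ 2 := by
  induction t with
  | zero => simp [cum, maxPMF, hf0]
  | succ t ih =>
    rw [cum_succ, ih]
    simp only [maxPMF, Nat.add_sub_cancel, Nat.succ_ne_zero, if_false]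
    ring

theorem IsSubPMF.maxPMF (hf : IsSubPMF f) (hf0 : f 0 = 0) : IsSubPMF (maxPMF f) where
  nonneg t := by
    unfold RepeaterChain.maxPMF
    split
    · exact le_rfl
    · exact sub_nonneg.2 <| pow_le_pow_left₀ (cum_nonneg hf.nonneg _)
        (cum_mono hf.nonneg (Nat.sub_le t 1)) 2
  cum_le_one t := by
    rw [cum_maxPMF hf0]
    exact pow_le_one₀ (cum_nonneg hf.nonneg t) (hf.cum_le_one t)

theorem cum_conv_self_le_cum_maxPMF (hg : ∀ t, 0 ≤ g t) (hf0 : f 0 = 0)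
    (hgf : ∀ t, cum g t ≤ cum f t) (t : ℕ) : cum (conv g g) t ≤ cum (maxPMF f) t :=
  calc cum (conv g g) t ≤ cum g t ^ 2 := (cum_conv_le_mul hg hg t).trans_eq (sq _).symm
    _ ≤ cum f t ^ 2 := pow_le_pow_left₀ (cum_nonneg hg t) (hgf t) 2
    _ = cum (maxPMF f) t := (cum_maxPMF hf0 t).symm

end Maximum

section GeometricCompound

variable {p : ℝ} {a b m : ℕ → ℝ}

theorem geomWeight_nonneg (hp0 : 0 < p) (hp1 : p ≤ 1) (k : ℕ) : 0 ≤ p * (1 - p) ^ k :=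
  mul_nonneg hp0.le (pow_nonneg (sub_nonneg.2 hp1) k)

theorem hasSum_geomWeight (hp0 : 0 < p) (hp1 : p ≤ 1) :
    HasSum (fun k : ℕ => p * (1 - p) ^ k) 1 := by
  have h := (hasSum_geometric_of_lt_one (sub_nonneg.2 hp1) (by linarith)).mul_left p
  rwa [sub_sub_cancel, mul_inv_cancel₀ hp0.ne'] at h

theorem summable_geomWeight_mul (hp0 : 0 < p) (hp1 : p ≤ 1) {c : ℕ → ℝ}
    (hc0 : ∀ k, 0 ≤ c k) (hc1 : ∀ k, c k ≤ 1) :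
    Summable fun k : ℕ => p * (1 - p) ^ k * c k :=
  (hasSum_geomWeight hp0 hp1).summable.of_nonneg_of_le
    (fun k => mul_nonneg (geomWeight_nonneg hp0 hp1 k) (hc0 k))
    (fun k => mul_le_of_le_one_right (geomWeight_nonneg hp0 hp1 k) (hc1 k))

theorem summable_cum_convPow (hp0 : 0 < p) (hp1 : p ≤ 1) (hm : IsSubPMF m) (t : ℕ) :
    Summable fun k : ℕ => p * (1 - p) ^ k * cum (convPow m (k + 1)) t :=
  summable_geomWeight_mul hp0 hp1 (fun k => cum_nonneg (hm.convPow (k + 1)).nonneg t)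
    (fun k => (hm.convPow (k + 1)).cum_le_one t)

theorem cum_geomCompound (hp0 : 0 < p) (hp1 : p ≤ 1) (hm : IsSubPMF m) (t : ℕ) :
    cum (geomCompound p m) t = ∑' k : ℕ, p * (1 - p) ^ k * cum (convPow m (k + 1)) t := by
  have hsummable (s : ℕ) : Summable fun k : ℕ => p * (1 - p) ^ k * convPow m (k + 1) s :=
    summable_geomWeight_mul hp0 hp1 (fun k => (hm.convPow (k + 1)).nonneg s)
      (fun k => (le_cum (hm.convPow (k + 1)).nonneg s).trans ((hm.convPow (k + 1)).cum_le_one s))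
  simp only [cum, geomCompound, Finset.mul_sum]
  exact (Summable.tsum_finsetSum fun s _ => hsummable s).symm

theorem IsSubPMF.geomCompound (hp0 : 0 < p) (hp1 : p ≤ 1) (hm : IsSubPMF m) :
    IsSubPMF (geomCompound p m) where
  nonneg t := tsum_nonneg fun k =>
    mul_nonneg (geomWeight_nonneg hp0 hp1 k) ((hm.convPow (k + 1)).nonneg t)
  cum_le_one t := by
    rw [cum_geomCompound hp0 hp1 hm]
    refine ((summable_cum_convPow hp0 hp1 hm t).tsum_le_tsum (fun k => ?_)
      (hasSum_geomWeight hp0 hp1).summable).trans_eq (hasSum_geomWeight hp0 hp1).tsum_eq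
    exact mul_le_of_le_one_right (geomWeight_nonneg hp0 hp1 k) ((hm.convPow (k + 1)).cum_le_one t)

theorem cum_geomCompound_mono (hp0 : 0 < p) (hp1 : p ≤ 1) (ha : IsSubPMF a) (hb : IsSubPMF b)
    (hab : ∀ t, cum a t ≤ cum b t) (t : ℕ) :
    cum (geomCompound p a) t ≤ cum (geomCompound p b) t := by
  rw [cum_geomCompound hp0 hp1 ha, cum_geomCompound hp0 hp1 hb]
  exact (summable_cum_convPow hp0 hp1 ha t).tsum_le_tsum
    (fun k => mul_le_mul_of_nonneg_left (cum_convPow_mono ha.nonneg hb.nonneg hab (k + 1) t)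
      (geomWeight_nonneg hp0 hp1 k))
    (summable_cum_convPow hp0 hp1 hb t)

theorem geomCompound_apply_zero (hm0 : m 0 = 0) : geomCompound p m 0 = 0 := by
  simp [geomCompound, convPow_succ_apply_zero hm0]

end GeometricCompound

section Protocols

variable {pgen pswap : ℝ}

theorem fSwap_apply_zero (n : ℕ) : fSwap pgen pswap n 0 = 0 := by
  cases n with
  | zero => simp [fSwap, geomPMF]
  | succ n => exact geomCompound_apply_zero (by simp [maxPMF])

theorem isSubPMF_fSwap (hgen0 : 0 ≤ pgen) (hgen1 : pgen ≤ 1) (hswap0 : 0 < pswap)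
    (hswap1 : pswap ≤ 1) (n : ℕ) : IsSubPMF (fSwap pgen pswap n) := by
  induction n with
  | zero => exact isSubPMF_geomPMF hgen0 hgen1
  | succ n ih => exact (ih.maxPMF (fSwap_apply_zero n)).geomCompound hswap0 hswap1

theorem isSubPMF_fUp (hgen0 : 0 ≤ pgen) (hgen1 : pgen ≤ 1) (hswap0 : 0 < pswap)
    (hswap1 : pswap ≤ 1) (n : ℕ) : IsSubPMF (fUp pgen pswap n) := by
  induction n with
  | zero => exact isSubPMF_geomPMF hgen0 hgen1
  | succ n ih => exact (ih.conv ih).geomCompound hswap0 hswap1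

end Protocols

end RepeaterChain

/-- `T_n^upper` stochastically dominates `T_n`: for all `n` and `t`,
`F_n^up(t) ≤ F_n(t)`, where `F_n`, `F_n^up` are the cumulative sums of the SWAP-ONLY
waiting-time distribution `f_n` and of its dominating sequential variant `f_n^up`. -/
theorem fUp_stochDom_fSwap (pgen pswap : ℝ)
    (hgen0 : 0 < pgen) (hgen1 : pgen ≤ 1) (hswap0 : 0 < pswap) (hswap1 : pswap ≤ 1) :
    ∀ n t : ℕ, cum (fUp pgen pswap n) t ≤ cum (fSwap pgen pswap n) t := by
  intro n
  induction n with
  | zero => exact fun t => le_rfl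
  | succ n ih =>
    have hf := isSubPMF_fSwap hgen0.le hgen1 hswap0 hswap1 n
    have hg := isSubPMF_fUp hgen0.le hgen1 hswap0 hswap1 n
    exact cum_geomCompound_mono hswap0 hswap1 (hg.conv hg) (hf.maxPMF (fSwap_apply_zero n))
      (cum_conv_self_le_cum_maxPMF hg.nonneg (fSwap_apply_zero n) ih)
end
end

section
/- Fix p_gen, p_swap ∈ (0,1], and let (f_n^up) be the waiting-time distributions of the sequential variant T_n^upper, with cumulative sums F_n^up(t) = Σ_{s=0}^{t} f_n^up(s). Then for every n ≥ 0, the mean of T_n^upper satisfies Σ_{t=1}^{∞} (1 − F_n^up(t−1)) = (2/p_swap)^n · (1/p_gen). -/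
noncomputable section

open RepeaterChain

/-!
The distributions involved are nonnegative, so we mirror them by `ℝ≥0∞`-valued functions, where every
series converges and sums may be interchanged freely. There the mass `∑ e(t)` and the first moment
`∑ t e(t)` behave as for random variables: masses multiply under convolution and moments satisfy
the Leibniz rule, so a sum of two i.i.d. copies has twice the mean, and a geometric compound sum
with parameter `p` of summands of mass one has `p⁻¹` times their mean. Hence the mean of
`T_n^upper` is `(2 / p_swap)^n / p_gen`; the tail-sum formula `∑ (1 - F(t)) = ∑ t f(t)` and `toReal`
carry this over to the real-valued statement.
-/

open scoped ENNReal
open Finset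

namespace ENNReal

lemma tsum_tsum_eq_tsum_sum_antidiagonal (f : ℕ → ℕ → ℝ≥0∞) :
    ∑' i, ∑' j, f i j = ∑' n, ∑ p ∈ antidiagonal n, f p.1 p.2 := by
  rw [← ENNReal.tsum_prod, ← HasAntidiagonal.sigmaAntidiagonalEquivProd.tsum_eq,
    ENNReal.tsum_sigma']
  exact tsum_congr fun n => Finset.tsum_subtype (antidiagonal n) fun p => f p.1 p.2

lemma tsum_tsum_add (g : ℕ → ℝ≥0∞) :
    ∑' i, ∑' j, g (i + j) = ∑' n : ℕ, ((n : ℝ≥0∞) + 1) * g n := by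
  rw [tsum_tsum_eq_tsum_sum_antidiagonal]
  refine tsum_congr fun n => ?_
  rw [sum_congr rfl fun p hp => congrArg g (mem_antidiagonal.1 hp), sum_const,
    Nat.card_antidiagonal, nsmul_eq_mul]
  push_cast; rfl

lemma tsum_natCast_add_one_mul_pow (x : ℝ≥0∞) :
    ∑' n : ℕ, ((n : ℝ≥0∞) + 1) * x ^ n = (1 - x)⁻¹ ^ 2 := by
  simp_rw [← tsum_tsum_add, pow_add, ENNReal.tsum_mul_left, ENNReal.tsum_mul_right,
    ENNReal.tsum_geometric, sq]

end ENNReal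

namespace RepeaterChain

def mass (e : ℕ → ℝ≥0∞) : ℝ≥0∞ := ∑' t, e t

def moment (e : ℕ → ℝ≥0∞) : ℝ≥0∞ := ∑' t : ℕ, (t : ℝ≥0∞) * e t

lemma tsum_one_sub_sum_range_eq_moment {e : ℕ → ℝ≥0∞} (he : mass e = 1) :
    ∑' t, (1 - ∑ s ∈ range (t + 1), e s) = moment e := by
  have tail : ∀ t, 1 - ∑ s ∈ range (t + 1), e s = ∑' i, e (i + t + 1) := fun t => by
    rw [← he, mass, ← ENNReal.summable.sum_add_tsum_nat_add',
      ENNReal.add_sub_cancel_left (ne_top_of_le_ne_top ENNReal.one_ne_top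
        (he ▸ ENNReal.sum_le_tsum _))]
    rfl
  rw [tsum_congr tail, ENNReal.tsum_comm, ENNReal.tsum_tsum_add (fun n => e (n + 1)), moment,
    tsum_eq_zero_add' (f := fun t : ℕ => (t : ℝ≥0∞) * e t) ENNReal.summable]
  simp

def econv (a b : ℕ → ℝ≥0∞) : ℕ → ℝ≥0∞ := fun t => ∑ s ∈ range (t + 1), a s * b (t - s)

def econvPow (m : ℕ → ℝ≥0∞) : ℕ → ℕ → ℝ≥0∞
  | 0 => fun t => if t = 0 then 1 else 0
  | k + 1 => econv (econvPow m k) m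

lemma mass_econv (a b : ℕ → ℝ≥0∞) : mass (econv a b) = mass a * mass b := by
  simp_rw [mass, ← ENNReal.tsum_mul_right, ← ENNReal.tsum_mul_left,
    ENNReal.tsum_tsum_eq_tsum_sum_antidiagonal]
  exact tsum_congr fun n => (Nat.sum_antidiagonal_eq_sum_range_succ (fun s u => a s * b u) n).symm

lemma natCast_mul_econv (a b : ℕ → ℝ≥0∞) (t : ℕ) :
    (t : ℝ≥0∞) * econv a b t
      = econv (fun s => (s : ℝ≥0∞) * a s) b t + econv a (fun u => (u : ℝ≥0∞) * b u) t := by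
  simp only [econv, mul_sum, ← sum_add_distrib]
  refine sum_congr rfl fun s hs => ?_
  have hst : s ≤ t := Nat.le_of_lt_succ (mem_range.1 hs)
  rw [show (t : ℝ≥0∞) = s + (t - s : ℕ) by rw [← Nat.cast_add, Nat.add_sub_of_le hst]]
  ring

lemma moment_econv (a b : ℕ → ℝ≥0∞) :
    moment (econv a b) = moment a * mass b + mass a * moment b := by
  simp_rw [moment, natCast_mul_econv, ENNReal.tsum_add]
  exact congrArg₂ (· + ·) (mass_econv _ _) (mass_econv _ _)

lemma mass_econvPow (m : ℕ → ℝ≥0∞) (k : ℕ) : mass (econvPow m k) = mass m ^ k := by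
  induction k with
  | zero => simp [mass, econvPow]
  | succ k ih => rw [econvPow, mass_econv, ih, pow_succ]

lemma moment_econvPow {m : ℕ → ℝ≥0∞} (hm : mass m = 1) (k : ℕ) :
    moment (econvPow m k) = k * moment m := by
  induction k with
  | zero => simp [moment, econvPow]
  | succ k ih =>
    rw [econvPow, moment_econv, ih, mass_econvPow, hm]
    push_cast; ring

def egeomPMF (p : ℝ≥0∞) : ℕ → ℝ≥0∞ := fun t => if t = 0 then 0 else p * (1 - p) ^ (t - 1)

def egeomCompound (p : ℝ≥0∞) (m : ℕ → ℝ≥0∞) : ℕ → ℝ≥0∞ :=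
  fun t => ∑' k : ℕ, p * (1 - p) ^ k * econvPow m (k + 1) t

lemma mass_egeomPMF {p : ℝ≥0∞} (hp0 : p ≠ 0) (hp1 : p ≤ 1) : mass (egeomPMF p) = 1 := by
  rw [mass, tsum_eq_zero_add' ENNReal.summable]
  simp only [egeomPMF, if_true, add_tsub_cancel_right, Nat.add_one_ne_zero, if_false, zero_add]
  rw [ENNReal.tsum_mul_left, ENNReal.tsum_geometric, ENNReal.sub_sub_cancel ENNReal.one_ne_top hp1,
    ENNReal.mul_inv_cancel hp0 (ne_top_of_le_ne_top ENNReal.one_ne_top hp1)]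

lemma moment_egeomPMF {p : ℝ≥0∞} (hp0 : p ≠ 0) (hp1 : p ≤ 1) : moment (egeomPMF p) = p⁻¹ := by
  rw [moment, tsum_eq_zero_add' ENNReal.summable]
  simp only [egeomPMF, if_true, add_tsub_cancel_right, Nat.add_one_ne_zero, if_false, mul_zero,
    zero_add, Nat.cast_add, Nat.cast_one, mul_left_comm _ p]
  rw [ENNReal.tsum_mul_left, ENNReal.tsum_natCast_add_one_mul_pow,
    ENNReal.sub_sub_cancel ENNReal.one_ne_top hp1, sq, ← mul_assoc,
    ENNReal.mul_inv_cancel hp0 (ne_top_of_le_ne_top ENNReal.one_ne_top hp1), one_mul]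

lemma mass_egeomCompound {p : ℝ≥0∞} (hp0 : p ≠ 0) (hp1 : p ≤ 1) {m : ℕ → ℝ≥0∞}
    (hm : mass m = 1) : mass (egeomCompound p m) = 1 := by
  have summand : ∀ k : ℕ, ∑' t, p * (1 - p) ^ k * econvPow m (k + 1) t = p * (1 - p) ^ k :=
    fun k => by rw [ENNReal.tsum_mul_left, ← mass, mass_econvPow, hm, one_pow, mul_one]
  simp only [mass, egeomCompound]
  rw [ENNReal.tsum_comm, tsum_congr summand, ENNReal.tsum_mul_left, ENNReal.tsum_geometric,
    ENNReal.sub_sub_cancel ENNReal.one_ne_top hp1,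
    ENNReal.mul_inv_cancel hp0 (ne_top_of_le_ne_top ENNReal.one_ne_top hp1)]

lemma moment_egeomCompound {p : ℝ≥0∞} (hp0 : p ≠ 0) (hp1 : p ≤ 1) {m : ℕ → ℝ≥0∞}
    (hm : mass m = 1) : moment (egeomCompound p m) = p⁻¹ * moment m := by
  have summand : ∀ k : ℕ, ∑' t : ℕ, (t : ℝ≥0∞) * (p * (1 - p) ^ k * econvPow m (k + 1) t)
      = p * moment m * (((k : ℝ≥0∞) + 1) * (1 - p) ^ k) := fun k => by
    simp_rw [mul_left_comm _ (p * _)]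
    rw [ENNReal.tsum_mul_left, ← moment, moment_econvPow hm]
    push_cast; ring
  rw [moment]
  simp only [egeomCompound, ← ENNReal.tsum_mul_left]
  rw [ENNReal.tsum_comm, tsum_congr summand, ENNReal.tsum_mul_left,
    ENNReal.tsum_natCast_add_one_mul_pow, ENNReal.sub_sub_cancel ENNReal.one_ne_top hp1, sq,
    mul_comm p, mul_assoc, ← mul_assoc p,
    ENNReal.mul_inv_cancel hp0 (ne_top_of_le_ne_top ENNReal.one_ne_top hp1), one_mul, mul_comm]

def efUp (q r : ℝ≥0∞) : ℕ → ℕ → ℝ≥0∞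
  | 0 => egeomPMF q
  | n + 1 => egeomCompound r (econv (efUp q r n) (efUp q r n))

lemma mass_efUp {q r : ℝ≥0∞} (hq0 : q ≠ 0) (hq1 : q ≤ 1) (hr0 : r ≠ 0) (hr1 : r ≤ 1) (n : ℕ) :
    mass (efUp q r n) = 1 := by
  induction n with
  | zero => exact mass_egeomPMF hq0 hq1
  | succ n ih => exact mass_egeomCompound hr0 hr1 (by rw [mass_econv, ih, one_mul])

lemma moment_efUp {q r : ℝ≥0∞} (hq0 : q ≠ 0) (hq1 : q ≤ 1) (hr0 : r ≠ 0) (hr1 : r ≤ 1) (n : ℕ) :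
    moment (efUp q r n) = (2 * r⁻¹) ^ n * q⁻¹ := by
  induction n with
  | zero => rw [pow_zero, one_mul]; exact moment_egeomPMF hq0 hq1
  | succ n ih =>
    have hmass := mass_efUp hq0 hq1 hr0 hr1 n
    rw [efUp, moment_egeomCompound hr0 hr1 (by rw [mass_econv, hmass, one_mul]), moment_econv,
      hmass, ih, pow_succ]
    ring

lemma conv_toReal {a b : ℕ → ℝ≥0∞} (ha : ∀ t, a t ≠ ∞) (hb : ∀ t, b t ≠ ∞) :
    conv (fun t => (a t).toReal) (fun t => (b t).toReal) = fun t => (econv a b t).toReal := by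
  funext t
  rw [econv, ENNReal.toReal_sum fun s _ => ENNReal.mul_ne_top (ha s) (hb _)]
  simp only [conv, ENNReal.toReal_mul]

lemma convPow_toReal {m : ℕ → ℝ≥0∞} (hm : mass m ≠ ∞) (k : ℕ) :
    convPow (fun t => (m t).toReal) k = fun t => (econvPow m k t).toReal := by
  induction k with
  | zero => funext t; by_cases ht : t = 0 <;> simp [convPow, econvPow, ht]
  | succ k ih =>
    have hk : mass (econvPow m k) ≠ ∞ := by rw [mass_econvPow]; exact ENNReal.pow_ne_top hm
    rw [convPow, econvPow, ih,
      conv_toReal (ENNReal.ne_top_of_tsum_ne_top hk) (ENNReal.ne_top_of_tsum_ne_top hm)]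

lemma geomPMF_toReal {p : ℝ≥0∞} (hp : p ≤ 1) :
    geomPMF p.toReal = fun t => (egeomPMF p t).toReal := by
  funext t
  by_cases ht : t = 0
  · simp [geomPMF, egeomPMF, ht]
  · simp [geomPMF, egeomPMF, ht, ENNReal.toReal_sub_of_le hp ENNReal.one_ne_top]

lemma geomCompound_toReal {p : ℝ≥0∞} (hp : p ≤ 1) {m : ℕ → ℝ≥0∞} (hm : mass m ≠ ∞) :
    geomCompound p.toReal (fun t => (m t).toReal) = fun t => (egeomCompound p m t).toReal := by
  have hpow : ∀ k t, econvPow m k t ≠ ∞ := fun k =>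
    ENNReal.ne_top_of_tsum_ne_top (by rw [← mass, mass_econvPow]; exact ENNReal.pow_ne_top hm)
  funext t
  rw [egeomCompound, ENNReal.tsum_toReal_eq fun k =>
    ENNReal.mul_ne_top (ENNReal.mul_ne_top (ne_top_of_le_ne_top ENNReal.one_ne_top hp)
      (ENNReal.pow_ne_top (ENNReal.sub_ne_top ENNReal.one_ne_top))) (hpow _ t)]
  simp only [geomCompound, convPow_toReal hm, ENNReal.toReal_mul, ENNReal.toReal_pow,
    ENNReal.toReal_sub_of_le hp ENNReal.one_ne_top, ENNReal.toReal_one]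

lemma fUp_toReal {q r : ℝ≥0∞} (hq0 : q ≠ 0) (hq1 : q ≤ 1) (hr0 : r ≠ 0) (hr1 : r ≤ 1) (n : ℕ) :
    fUp q.toReal r.toReal n = fun t => (efUp q r n t).toReal := by
  induction n with
  | zero => exact geomPMF_toReal hq1
  | succ n ih =>
    have hmass := mass_efUp hq0 hq1 hr0 hr1 n
    have hfin := ENNReal.ne_top_of_tsum_ne_top (hmass.trans_ne ENNReal.one_ne_top)
    rw [fUp, ih, conv_toReal hfin hfin, geomCompound_toReal hr1 (by simp [mass_econv, hmass])]
    rfl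

theorem tsum_one_sub_cum_fUp_toReal {q r : ℝ≥0∞} (hq0 : q ≠ 0) (hq1 : q ≤ 1) (hr0 : r ≠ 0)
    (hr1 : r ≤ 1) (n : ℕ) :
    ∑' t : ℕ, (1 - cum (fUp q.toReal r.toReal n) t) = ((2 * r⁻¹) ^ n * q⁻¹).toReal := by
  have hmass := mass_efUp hq0 hq1 hr0 hr1 n
  have hcum : ∀ t, 1 - cum (fUp q.toReal r.toReal n) t
      = (1 - ∑ s ∈ range (t + 1), efUp q r n s).toReal := fun t => by
    rw [fUp_toReal hq0 hq1 hr0 hr1, cum, ← ENNReal.toReal_sum fun s _ =>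
      ENNReal.ne_top_of_tsum_ne_top (hmass.trans_ne ENNReal.one_ne_top) s,
      ENNReal.toReal_sub_of_le (hmass ▸ ENNReal.sum_le_tsum _) ENNReal.one_ne_top,
      ENNReal.toReal_one]
  rw [tsum_congr hcum, ← ENNReal.tsum_toReal_eq fun t =>
      ne_top_of_le_ne_top ENNReal.one_ne_top tsub_le_self,
    tsum_one_sub_sum_range_eq_moment hmass, moment_efUp hq0 hq1 hr0 hr1]

end RepeaterChain

/-- The sum over `t ≥ 1` of `1 − F_n^up(t−1)` is written as the sum over `t : ℕ` of
`1 − F_n^up(t)`. -/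
theorem mean_fUp (pgen pswap : ℝ)
    (hgen0 : 0 < pgen) (hgen1 : pgen ≤ 1) (hswap0 : 0 < pswap) (hswap1 : pswap ≤ 1) :
    ∀ n : ℕ, ∑' t : ℕ, (1 - cum (fUp pgen pswap n) t) = (2 / pswap) ^ n * (1 / pgen) := by
  intro n
  have hq := ENNReal.toReal_ofReal hgen0.le
  have hr := ENNReal.toReal_ofReal hswap0.le
  have key := tsum_one_sub_cum_fUp_toReal (ENNReal.ofReal_pos.2 hgen0).ne'
    (ENNReal.ofReal_le_one.2 hgen1) (ENNReal.ofReal_pos.2 hswap0).ne'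
    (ENNReal.ofReal_le_one.2 hswap1) n
  rw [hq, hr] at key
  rw [key]
  simp [ENNReal.toReal_inv, hq, hr, div_eq_mul_inv]
end
end
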